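/- Any product of non-singular simplicial sets is non-singular. -/

import Mathlib

open CategoryTheory Simplicial Opposite MonoidalCategory Limits

/-- The representing map of a simplex is degreewise injective. -/
def SSet.RepInj (X : SSet.{0}) {n : ℕ} (x : X _⦋n⦌) : Prop :=
  ∀ m : SimplexCategoryᵒᵖ, Function.Injective (((@SSet.yonedaEquiv X ⦋n⦌).symm x).app m)

/-- The `i`-th vertex `x εᵢ` of a simplex. -/
def SSet.vert (X : SSet.{0}) {n : ℕ} (x : X _⦋n⦌) (i : Fin (n + 1)) : X _⦋0⦌ :=
  X.map (SimplexCategory.const ⦋0⦌ ⦋n⦌ i).op x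

/-- A simplex is degenerate if it is obtained from a simplex of strictly
lower degree by the action of an operator. -/
def SSet.IsDegenerate (X : SSet.{0}) {n : ℕ} (x : X _⦋n⦌) : Prop :=
  ∃ (m : ℕ) (_ : m < n) (α : (⦋n⦌ : SimplexCategory) ⟶ ⦋m⦌) (y : X _⦋m⦌),
    X.map α.op y = x

/-- A simplicial set is non-singular if every non-degenerate simplex has a
degreewise injective representing map. -/
def SSet.NonSingular (X : SSet.{0}) : Prop :=
  ∀ (n : ℕ) (x : X _⦋n⦌), ¬ X.IsDegenerate x → X.RepInj x

universe u

namespace SSet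

open SimplexCategory

lemma pi_ext {C : Type*} [Category C] {ι : Type u} {F : ι → C ⥤ Type u} {U : C}
    {a b : (∏ᶜ F).obj U} (h : ∀ i, (Pi.π F i).app U a = (Pi.π F i).app U b) : a = b := by
  apply (piObjIso F U).toEquiv.injective
  refine Types.limit_ext' _ _ _ fun ⟨i⟩ => ?_
  have hπ := ConcreteCategory.congr_hom (piObjIso_hom_comp_π F U i)
  exact (hπ a).trans ((h i).trans (hπ b).symm)

variable {X : SSet.{0}}

lemma isDegenerate_iff_mem_degenerate {n : ℕ} (x : X _⦋n⦌) :
    X.IsDegenerate x ↔ x ∈ X.degenerate n :=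
  Iff.rfl

lemma repInj_iff_mono {n : ℕ} (x : X _⦋n⦌) : X.RepInj x ↔ Mono (yonedaEquiv.symm x) := by
  simp only [RepInj, NatTrans.mono_iff_mono_app, CategoryTheory.mono_iff_injective]

lemma nonSingular_iff_nonsingular : X.NonSingular ↔ X.Nonsingular :=
  ⟨fun h => ⟨fun ⟨x, hx⟩ =>
      (repInj_iff_mono x).mp (h _ x (mt (isDegenerate_iff_mem_degenerate x).mp hx))⟩,
    fun _ _ x hx => (repInj_iff_mono x).mpr
      (Nonsingular.mono' x (mt (isDegenerate_iff_mem_degenerate x).mpr hx))⟩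

lemma vert_map {n m : ℕ} (f : ⦋n⦌ ⟶ ⦋m⦌) (x : X _⦋m⦌) (i : Fin (n + 1)) :
    X.vert (X.map f.op x) i = X.vert x (f.toOrderHom i) := by
  rw [vert, vert, ← Functor.map_comp_apply, ← op_comp, SimplexCategory.const_comp]

lemma vert_naturality_apply {Y : SSet.{0}} (f : X ⟶ Y) {n : ℕ} (x : X _⦋n⦌) (i : Fin (n + 1)) :
    f.app _ (X.vert x i) = Y.vert (f.app _ x) i :=
  NatTrans.naturality_apply f _ x

lemma vert_yonedaEquiv_symm_app {n d : ℕ} (x : X _⦋n⦌) (a : Δ[n] _⦋d⦌) (l : Fin (d + 1)) :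
    X.vert ((yonedaEquiv.symm x).app _ a) l = X.vert x (a l) :=
  vert_map _ x l

lemma mono_yonedaEquiv_symm_iff_injective_vert {n : ℕ} (x : X _⦋n⦌) :
    Mono (yonedaEquiv.symm x) ↔ Function.Injective (X.vert x) := by
  simp only [NatTrans.mono_iff_mono_app, CategoryTheory.mono_iff_injective]
  constructor
  · intro h i j hij
    exact congr_arg (· 0) (h (op ⦋0⦌)
      (a₁ := stdSimplex.objEquiv.symm (SimplexCategory.const ⦋0⦌ ⦋n⦌ i))
      (a₂ := stdSimplex.objEquiv.symm (SimplexCategory.const ⦋0⦌ ⦋n⦌ j)) hij)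
  · rintro h ⟨⟨d⟩⟩ a b hab
    refine stdSimplex.ext a b fun l => h ?_
    rw [← vert_yonedaEquiv_symm_app, ← vert_yonedaEquiv_symm_app, hab]

/-- Write `x = f^* y` with `f` epi and `y` non-degenerate; since `y` has distinct vertices,
`f` identifies `j` and `k`, hence also `j` and `j + 1`, so it factors through `σ j`. -/
lemma Nonsingular.σ_δ_succ_eq_self_of_vert_eq [X.Nonsingular] {n : ℕ} {x : X _⦋n + 1⦌}
    {j : Fin (n + 1)} {k : Fin (n + 2)} (hjk : j.castSucc < k)
    (hx : X.vert x j.castSucc = X.vert x k) : X.σ j (X.δ j.succ x) = x := by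
  obtain ⟨m, f, _, ⟨y, hy⟩, rfl⟩ := X.exists_nonDegenerate x
  have hfjk : f.toOrderHom j.castSucc = f.toOrderHom k := by
    rw [vert_map, vert_map] at hx
    exact (mono_yonedaEquiv_symm_iff_injective_vert y).mp (Nonsingular.mono' y hy) hx
  have hfj : f.toOrderHom j.castSucc = f.toOrderHom j.succ :=
    le_antisymm (f.toOrderHom.monotone (Fin.castSucc_le_succ j))
      (hfjk ▸ f.toOrderHom.monotone (Fin.castSucc_lt_iff_succ_le.mp hjk))
  obtain ⟨f', rfl⟩ := eq_σ_comp_of_not_injective' f j hfj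
  simp only [SimplicialObject.σ, SimplicialObject.δ, ← Functor.map_comp_apply, ← op_comp,
    δ_comp_σ_succ_assoc]

/-- Two equal vertices `j < k` of `x` are equal in every factor, so every component of `x`,
and hence `x` itself, is fixed by `σ j ∘ δ (j + 1)`: then `x` is degenerate. -/
instance Nonsingular.pi {ι : Type} (F : ι → SSet.{0}) [∀ i, (F i).Nonsingular] :
    (∏ᶜ F).Nonsingular where
  mono := by
    rintro n ⟨x, hx⟩
    rw [mono_yonedaEquiv_symm_iff_injective_vert]
    refine .of_lt_imp_ne fun j k hjk hv => ?_
    obtain _ | n := n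
    · exact (Fin.subsingleton_one.elim j k ▸ hjk).false
    obtain ⟨j, rfl⟩ := Fin.exists_castSucc_eq.mpr (hjk.trans_le (Fin.le_last k)).ne
    have hσδ : (∏ᶜ F).σ j ((∏ᶜ F).δ j.succ x) = x := pi_ext fun i => by
      rw [σ_naturality_apply, δ_naturality_apply]
      refine Nonsingular.σ_δ_succ_eq_self_of_vert_eq hjk ?_
      rw [← vert_naturality_apply, ← vert_naturality_apply, hv]
    exact hx (hσδ ▸ (∏ᶜ F).σ_mem_degenerate j _)

end SSet

/-- Any product of non-singular simplicial sets is
non-singular. -/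
theorem nonSingular_product {ι : Type} (F : ι → SSet.{0})
    (hF : ∀ i, (F i).NonSingular) : (∏ᶜ F).NonSingular := by
  have := fun i => SSet.nonSingular_iff_nonsingular.mp (hF i)
  exact SSet.nonSingular_iff_nonsingular.mpr inferInstance
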